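/- Let p, q ∈ (−∞, 1) and t ≥ 0. Assume that ‖T_t f‖_q ≥ ‖f‖_p for every f : Ω → (0,∞). Then also ‖T_t f‖_{p'} ≥ ‖f‖_{q'} for every f : Ω → (0,∞), where p' = p/(p−1), q' = q/(q−1) (with 0' = 0). -/

import Mathlib

open Real Finset

noncomputable section

variable {Ω : Type*}

/-- Expectation `E f = ∑ ω, μ ω * f ω`. -/
def pexp [Fintype Ω] (μ : Ω → ℝ) (f : Ω → ℝ) : ℝ := ∑ ω, μ ω * f ω

/-- Dirichlet form `𝓔(f,g) = E[f · L g]`. -/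
def dform [Fintype Ω] (μ : Ω → ℝ) (L : (Ω → ℝ) →ₗ[ℝ] (Ω → ℝ)) (f g : Ω → ℝ) : ℝ :=
  pexp μ fun ω => f ω * L g ω

/-- Entropy `Ent(f) = E[f log f] − (E f) log (E f)`. -/
def entE [Fintype Ω] (μ : Ω → ℝ) (f : Ω → ℝ) : ℝ :=
  pexp μ (fun ω => f ω * Real.log (f ω)) - pexp μ f * Real.log (pexp μ f)

/-- Variance `Var(f) = E[f²] − (E f)²`. -/
def varE [Fintype Ω] (μ : Ω → ℝ) (f : Ω → ℝ) : ℝ :=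
  pexp μ (fun ω => f ω ^ 2) - (pexp μ f) ^ 2

/-- The structural conditions on the Markov generator `L`: `L 1 = 0`, self-adjointness,
positive semidefiniteness, and nonnegativity of `L f` at a global maximum point of `f`. -/
def IsGen [Fintype Ω] (μ : Ω → ℝ) (L : (Ω → ℝ) →ₗ[ℝ] (Ω → ℝ)) : Prop :=
  L (fun _ => 1) = 0 ∧
  (∀ f g, pexp μ (fun ω => f ω * L g ω) = pexp μ (fun ω => g ω * L f ω)) ∧
  (∀ f, 0 ≤ pexp μ (fun ω => f ω * L f ω)) ∧
  (∀ (f : Ω → ℝ) (ω : Ω), (∀ x, f x ≤ f ω) → 0 ≤ L f ω)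

/-- The `p`-logSob inequality with constant `C` (with the conventions for `p = 0` and `p = 1`). -/
def LogSob [Fintype Ω] (μ : Ω → ℝ) (L : (Ω → ℝ) →ₗ[ℝ] (Ω → ℝ)) (p C : ℝ) : Prop :=
  if p = 0 then
    ∀ f : Ω → ℝ, (∀ ω, 0 < f ω) →
      varE μ (fun ω => Real.log (f ω)) ≤ -(C / 2) * dform μ L f (fun ω => (f ω)⁻¹)
  else if p = 1 then
    ∀ f : Ω → ℝ, (∀ ω, 0 < f ω) →
      entE μ f ≤ C / 4 * dform μ L f (fun ω => Real.log (f ω))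
  else
    ∀ f : Ω → ℝ, (∀ ω, 0 < f ω) →
      entE μ (fun ω => f ω ^ p) ≤
        C * p ^ 2 / (4 * (p - 1)) * dform μ L (fun ω => f ω ^ (p - 1)) f

/-- Markov semigroup `T t = e^{-tL}`. -/
def heat [Fintype Ω] (L : (Ω → ℝ) →ₗ[ℝ] (Ω → ℝ)) (t : ℝ) (f : Ω → ℝ) : Ω → ℝ :=
  NormedSpace.exp ((-t) • (LinearMap.toContinuousLinearMap L)) f

/-- `‖f‖_p` for positive `f` and arbitrary real `p`, with `‖f‖_0 = exp (E log f)`. -/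
def pnorm [Fintype Ω] (μ : Ω → ℝ) (p : ℝ) (f : Ω → ℝ) : ℝ :=
  if p = 0 then Real.exp (pexp μ fun ω => Real.log (f ω))
  else (pexp μ fun ω => f ω ^ p) ^ (1 / p)

/-- `‖f‖_p = (E |f|^p)^{1/p}` for real-valued `f`. -/
def pnormAbs [Fintype Ω] (μ : Ω → ℝ) (p : ℝ) (f : Ω → ℝ) : ℝ :=
  (pexp μ fun ω => |f ω| ^ p) ^ (1 / p)

/-- Hölder conjugate `p' = p/(p-1)`, with the convention `0' = 0`. -/
def hconj (p : ℝ) : ℝ := if p = 0 then 0 else p / (p - 1)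

/-- The simple generator `L = Id − E`. -/
def simpleL [Fintype Ω] (μ : Ω → ℝ) : (Ω → ℝ) →ₗ[ℝ] (Ω → ℝ) where
  toFun f := fun ω => f ω - pexp μ f
  map_add' f g := by
    funext ω
    simp only [Pi.add_apply, pexp, mul_add, Finset.sum_add_distrib]
    ring
  map_smul' c f := by
    funext ω
    simp only [Pi.smul_apply, smul_eq_mul, pexp, RingHom.id_apply]
    rw [mul_sub, Finset.mul_sum]
    congr 1
    exact Finset.sum_congr rfl fun x _ => by ring

/-! For positive `g`, the hypothesis, reverse Hölder for `(q, q')` and the self-adjointness of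
`T_t` give `‖g‖_p ‖f‖_{q'} ≤ ‖T_t g‖_q ‖f‖_{q'} ≤ E[T_t g · f] = E[g · T_t f]`. Reverse Hölder for
`(p, p')` is an equality for `g = (T_t f)^{1/(p-1)}` (`g = (T_t f)⁻¹` if `p = 0`), where the right
side becomes `‖g‖_p ‖T_t f‖_{p'}`; cancelling `‖g‖_p` gives the claim. All of this needs
`T_t f > 0`, which follows from the maximum principle for `L`. -/

section Expectation

variable [Fintype Ω]

lemma nonempty_of_sum_eq_one {μ : Ω → ℝ} (hμ1 : ∑ ω, μ ω = 1) : Nonempty Ω :=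
  (Finset.nonempty_of_sum_ne_zero (hμ1 ▸ one_ne_zero)).to_subtype.map (↑)

lemma pexp_mul_comm (μ f g : Ω → ℝ) :
    pexp μ (fun ω => f ω * g ω) = pexp μ (fun ω => g ω * f ω) := by
  simp only [mul_comm (f _)]

lemma pexp_nonneg {μ : Ω → ℝ} (hμ : ∀ ω, 0 ≤ μ ω) {f : Ω → ℝ} (hf : 0 ≤ f) : 0 ≤ pexp μ f :=
  Finset.sum_nonneg fun ω _ => mul_nonneg (hμ ω) (hf ω)

lemma pexp_pos [Nonempty Ω] {μ : Ω → ℝ} (hμ : ∀ ω, 0 < μ ω) {f : Ω → ℝ} (hf : ∀ ω, 0 < f ω) :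
    0 < pexp μ f :=
  Finset.sum_pos (fun ω _ => mul_pos (hμ ω) (hf ω)) Finset.univ_nonempty

lemma hasSum_pexp_mul (μ g : Ω → ℝ) {F : ℕ → Ω → ℝ} {a : Ω → ℝ} (hF : HasSum F a) :
    HasSum (fun n => pexp μ fun ω => g ω * F n ω) (pexp μ fun ω => g ω * a ω) := by
  simp only [pexp, ← mul_assoc]
  exact hasSum_sum fun ω _ => (Pi.hasSum.1 hF ω).mul_left _

end Expectation

lemma apply_le_mul_apply_single_of_nonneg [DecidableEq Ω] {L : (Ω → ℝ) →ₗ[ℝ] (Ω → ℝ)}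
    (hmax : ∀ (f : Ω → ℝ) (ω : Ω), (∀ x, f x ≤ f ω) → 0 ≤ L f ω)
    {g : Ω → ℝ} (hg : 0 ≤ g) (ω : Ω) : L g ω ≤ g ω * L (Pi.single ω 1) ω := by
  set h : Ω → ℝ := g - g ω • Pi.single ω 1
  have hh : 0 ≤ h := fun x => by
    by_cases hx : x = ω
    · simp [h, hx]
    · simpa [h, hx] using hg x
  have h_nonpos : L h ω ≤ 0 := by
    have := hmax (-h) ω fun x => by simpa [h] using hh x
    simpa using this
  have hsplit : L g = g ω • L (Pi.single ω 1) + L h := by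
    rw [← map_smul, ← map_add, add_sub_cancel]
  rw [hsplit]
  simpa using h_nonpos

section Semigroup

variable [Fintype Ω]

lemma hasSum_exp_apply (A : (Ω → ℝ) →L[ℝ] (Ω → ℝ)) (f : Ω → ℝ) :
    HasSum (fun n : ℕ => ((n.factorial : ℝ)⁻¹ • A ^ n) f) (NormedSpace.exp A f) :=
  (NormedSpace.exp_series_hasSum_exp' (𝕂 := ℝ) A).mapL (ContinuousLinearMap.apply ℝ (Ω → ℝ) f)

lemma le_exp_apply_of_nonneg {B : (Ω → ℝ) →L[ℝ] (Ω → ℝ)} (hB : ∀ g, 0 ≤ g → 0 ≤ B g)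
    {f : Ω → ℝ} (hf : 0 ≤ f) : f ≤ NormedSpace.exp B f := by
  have hpow : ∀ n : ℕ, 0 ≤ (B ^ n) f := fun n => by
    induction n with
    | zero => simpa using hf
    | succ n ih => rw [pow_succ']; exact hB _ ih
  simpa using le_hasSum (hasSum_exp_apply B f) 0 fun n _ => by
    simpa using smul_nonneg (by positivity : (0 : ℝ) ≤ (n.factorial : ℝ)⁻¹) (hpow n)

lemma heat_pos {L : (Ω → ℝ) →ₗ[ℝ] (Ω → ℝ)}
    (hmax : ∀ (f : Ω → ℝ) (ω : Ω), (∀ x, f x ≤ f ω) → 0 ≤ L f ω)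
    {t : ℝ} (ht : 0 ≤ t) {f : Ω → ℝ} (hf : ∀ ω, 0 < f ω) (ω : Ω) : 0 < heat L t f ω := by
  classical
  obtain ⟨c, hc⟩ := (Set.finite_range fun ω => L (Pi.single ω 1) ω).bddAbove
  set A := L.toContinuousLinearMap
  -- `c - L` preserves positivity, and `-t L` differs from `t (c - L)` by a scalar.
  set B := t • (c • 1 - A)
  have hB : ∀ g, 0 ≤ g → 0 ≤ B g := fun g hg ω => by
    have hdiag := apply_le_mul_apply_single_of_nonneg hmax hg ω
    have hcg := mul_le_mul_of_nonneg_left (hc ⟨ω, rfl⟩) (hg ω)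
    have : B g ω = t * (c * g ω - L g ω) := by simp [B, A]
    rw [this]
    exact mul_nonneg ht (by linarith)
  have hball : ∀ X : (Ω → ℝ) →L[ℝ] (Ω → ℝ),
      X ∈ Metric.eball 0 (NormedSpace.expSeries ℝ ((Ω → ℝ) →L[ℝ] (Ω → ℝ))).radius :=
    fun X => by rw [NormedSpace.expSeries_radius_eq_top]; exact edist_lt_top _ _
  have hsplit : (-t) • A = algebraMap ℝ _ (-(t * c)) + B := by
    rw [Algebra.algebraMap_eq_smul_one]
    module
  have hexp : NormedSpace.exp ((-t) • A) = Real.exp (-(t * c)) • NormedSpace.exp B := by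
    rw [hsplit, NormedSpace.exp_add_of_commute_of_mem_ball (Algebra.commute_algebraMap_left _ _)
      (hball _) (hball _), ← NormedSpace.algebraMap_exp_comm, ← Algebra.smul_def, Real.exp_eq_exp_ℝ]
  have hle := le_exp_apply_of_nonneg hB (fun ω => (hf ω).le) ω
  change 0 < NormedSpace.exp ((-t) • A) f ω
  rw [hexp]
  exact mul_pos (Real.exp_pos _) ((hf ω).trans_le hle)

def IsSelfAdjointWrt (μ : Ω → ℝ) (A : (Ω → ℝ) → Ω → ℝ) : Prop :=
  ∀ f g, pexp μ (fun ω => f ω * A g ω) = pexp μ (fun ω => g ω * A f ω)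

variable {μ : Ω → ℝ}

lemma IsSelfAdjointWrt.smul {A : (Ω → ℝ) → Ω → ℝ} (hA : IsSelfAdjointWrt μ A) (c : ℝ) :
    IsSelfAdjointWrt μ (c • A) := fun f g => by
  simpa [pexp, Finset.mul_sum, mul_left_comm] using congrArg (c * ·) (hA f g)

lemma IsSelfAdjointWrt.pow {A : (Ω → ℝ) →L[ℝ] (Ω → ℝ)} (hA : IsSelfAdjointWrt μ A) (n : ℕ) :
    IsSelfAdjointWrt μ ⇑(A ^ n) := by
  induction n with
  | zero => intro f g; simpa using pexp_mul_comm μ f g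
  | succ n ih =>
    intro f g
    calc pexp μ (fun ω => f ω * (A ^ (n + 1)) g ω)
        = pexp μ (fun ω => A g ω * (A ^ n) f ω) := ih f (A g)
      _ = pexp μ (fun ω => (A ^ n) f ω * A g ω) := pexp_mul_comm μ _ _
      _ = pexp μ (fun ω => g ω * (A ^ (n + 1)) f ω) := by rw [hA, pow_succ']; rfl

lemma IsSelfAdjointWrt.exp {A : (Ω → ℝ) →L[ℝ] (Ω → ℝ)} (hA : IsSelfAdjointWrt μ A) :
    IsSelfAdjointWrt μ ⇑(NormedSpace.exp A) := fun f g => by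
  refine (hasSum_pexp_mul μ f (hasSum_exp_apply A g)).unique ?_
  convert hasSum_pexp_mul μ g (hasSum_exp_apply A f) using 2 with n
  exact (hA.pow n).smul _ f g

lemma IsSelfAdjointWrt.heat {L : (Ω → ℝ) →ₗ[ℝ] (Ω → ℝ)} (hL : IsSelfAdjointWrt μ L) (t : ℝ) :
    IsSelfAdjointWrt μ (heat L t) :=
  IsSelfAdjointWrt.exp (A := (-t) • L.toContinuousLinearMap) (hL.smul (-t))

end Semigroup

@[simp]
lemma hconj_zero : hconj 0 = 0 := if_pos rfl

lemma hconj_of_ne_zero {p : ℝ} (hp : p ≠ 0) : hconj p = p / (p - 1) := if_neg hp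

lemma hconj_hconj {p : ℝ} (hp : p ≠ 1) : hconj (hconj p) = p := by
  rcases eq_or_ne p 0 with rfl | hp0
  · simp
  have hp1 : p - 1 ≠ 0 := sub_ne_zero.2 hp
  rw [hconj_of_ne_zero hp0, hconj_of_ne_zero (div_ne_zero hp0 hp1)]
  field_simp
  ring

lemma hconj_pos_of_neg {q : ℝ} (hq : q < 0) : 0 < hconj q := by
  rw [hconj_of_ne_zero hq.ne]
  exact div_pos_of_neg_of_neg hq (by linarith)

lemma hconj_lt_one_of_neg {q : ℝ} (hq : q < 0) : hconj q < 1 := by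
  rw [hconj_of_ne_zero hq.ne]
  exact (div_lt_one_of_neg (by linarith)).2 (by linarith)

section Norms

variable [Fintype Ω] {μ : Ω → ℝ}

lemma pnorm_zero (f : Ω → ℝ) : pnorm μ 0 f = Real.exp (pexp μ fun ω => Real.log (f ω)) :=
  if_pos rfl

lemma pnorm_of_ne_zero {p : ℝ} (hp : p ≠ 0) (f : Ω → ℝ) :
    pnorm μ p f = (pexp μ fun ω => f ω ^ p) ^ (1 / p) :=
  if_neg hp

lemma pnorm_pos [Nonempty Ω] (hμ : ∀ ω, 0 < μ ω) (p : ℝ) {f : Ω → ℝ} (hf : ∀ ω, 0 < f ω) :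
    0 < pnorm μ p f := by
  unfold pnorm
  split
  · exact Real.exp_pos _
  · exact Real.rpow_pos_of_pos (pexp_pos hμ fun ω => Real.rpow_pos_of_pos (hf ω) _) _

lemma pnorm_zero_mul {u v : Ω → ℝ} (hu : ∀ ω, 0 < u ω) (hv : ∀ ω, 0 < v ω) :
    pnorm μ 0 u * pnorm μ 0 v = pnorm μ 0 (fun ω => u ω * v ω) := by
  simp only [pnorm_zero, ← Real.exp_add, pexp, ← Finset.sum_add_distrib, ← mul_add,
    Real.log_mul (hu _).ne' (hv _).ne']

lemma pnorm_zero_le_pexp (hμ : ∀ ω, 0 ≤ μ ω) (hμ1 : ∑ ω, μ ω = 1) {f : Ω → ℝ}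
    (hf : ∀ ω, 0 < f ω) : pnorm μ 0 f ≤ pexp μ f := by
  calc pnorm μ 0 f = ∏ ω, f ω ^ μ ω := by
        rw [pnorm_zero, pexp, Real.exp_sum]
        exact Finset.prod_congr rfl fun ω _ => by rw [Real.rpow_def_of_pos (hf ω), mul_comm]
    _ ≤ pexp μ f := Real.geom_mean_le_arith_mean_weighted _ _ _
        (fun ω _ => hμ ω) hμ1 fun ω _ => (hf ω).le

lemma pexp_rpow_mul_rpow_le (hμ : ∀ ω, 0 ≤ μ ω) {a : ℝ} (ha0 : 0 < a) (ha1 : a ≤ 1)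
    {u v : Ω → ℝ} (hu : 0 ≤ u) (hv : ∀ ω, 0 < v ω) :
    pexp μ (fun ω => u ω ^ a * v ω ^ (1 - a)) ≤ pexp μ u ^ a * pexp μ v ^ (1 - a) := by
  have key := Real.inner_le_weight_mul_Lp_of_nonneg Finset.univ (one_le_inv₀ ha0 |>.2 ha1)
    (fun ω => μ ω * v ω) (fun ω => (u ω / v ω) ^ a) (fun ω => mul_nonneg (hμ ω) (hv ω).le)
    (fun ω => Real.rpow_nonneg (div_nonneg (hu ω) (hv ω).le) _)
  have hlhs : ∀ ω, μ ω * v ω * (u ω / v ω) ^ a = μ ω * (u ω ^ a * v ω ^ (1 - a)) := fun ω => by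
    rw [Real.div_rpow (hu ω) (hv ω).le, Real.rpow_sub (hv ω), Real.rpow_one]
    field_simp
  have hrhs : ∀ ω, μ ω * v ω * ((u ω / v ω) ^ a) ^ a⁻¹ = μ ω * u ω := fun ω => by
    rw [Real.rpow_rpow_inv (div_nonneg (hu ω) (hv ω).le) ha0.ne']
    field_simp [(hv ω).ne']
  simp only [hlhs, hrhs, inv_inv] at key
  rw [mul_comm]
  exact key

lemma pnorm_mul_pnorm_hconj_le_of_pos [Nonempty Ω] (hμ : ∀ ω, 0 < μ ω) {q : ℝ} (hq0 : 0 < q)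
    (hq1 : q < 1) {u v : Ω → ℝ} (hu : ∀ ω, 0 < u ω) (hv : ∀ ω, 0 < v ω) :
    pnorm μ q u * pnorm μ (hconj q) v ≤ pexp μ (fun ω => u ω * v ω) := by
  have hq1' : q - 1 ≠ 0 := sub_ne_zero.2 hq1.ne
  set S := pexp μ (fun ω => u ω * v ω)
  set W := pexp μ (fun ω => v ω ^ (q / (q - 1)))
  have hS : 0 < S := pexp_pos hμ fun ω => mul_pos (hu ω) (hv ω)
  have hW : 0 < W := pexp_pos hμ fun ω => Real.rpow_pos_of_pos (hv ω) _
  -- `u^q = (u v)^q (v^{q'})^{1-q}`, so Hölder with exponent `q` bounds `E u^q`.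
  have hsplit : ∀ ω, (u ω * v ω) ^ q * (v ω ^ (q / (q - 1))) ^ (1 - q) = u ω ^ q := fun ω => by
    rw [Real.mul_rpow (hu ω).le (hv ω).le, ← Real.rpow_mul (hv ω).le, mul_assoc,
      ← Real.rpow_add (hv ω), show q + q / (q - 1) * (1 - q) = 0 by field_simp; ring,
      Real.rpow_zero, mul_one]
  have hholder : pexp μ (fun ω => u ω ^ q) ≤ S ^ q * W ^ (1 - q) := by
    simpa only [hsplit] using pexp_rpow_mul_rpow_le (fun ω => (hμ ω).le) hq0 hq1.le
      (fun ω => (mul_pos (hu ω) (hv ω)).le) fun ω => Real.rpow_pos_of_pos (hv ω) (q / (q - 1))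
  calc pnorm μ q u * pnorm μ (hconj q) v
      = pexp μ (fun ω => u ω ^ q) ^ (1 / q) * W ^ ((q - 1) / q) := by
        rw [pnorm_of_ne_zero hq0.ne', pnorm_of_ne_zero (hconj_of_ne_zero hq0.ne' ▸
          div_ne_zero hq0.ne' hq1'), hconj_of_ne_zero hq0.ne', one_div_div]
    _ ≤ (S ^ q * W ^ (1 - q)) ^ (1 / q) * W ^ ((q - 1) / q) := by
        gcongr
        exact pexp_nonneg (fun ω => (hμ ω).le) fun ω => (Real.rpow_pos_of_pos (hu ω) _).le
    _ = S := by
        rw [Real.mul_rpow (by positivity) (by positivity), ← Real.rpow_mul hS.le,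
          ← Real.rpow_mul hW.le, mul_assoc, ← Real.rpow_add hW, mul_one_div_cancel hq0.ne',
          show (1 - q) * (1 / q) + (q - 1) / q = 0 by field_simp; ring,
          Real.rpow_one, Real.rpow_zero, mul_one]

/-- Reverse Hölder inequality. -/
lemma pnorm_mul_pnorm_hconj_le (hμ : ∀ ω, 0 < μ ω) (hμ1 : ∑ ω, μ ω = 1) {q : ℝ} (hq : q < 1)
    {u v : Ω → ℝ} (hu : ∀ ω, 0 < u ω) (hv : ∀ ω, 0 < v ω) :
    pnorm μ q u * pnorm μ (hconj q) v ≤ pexp μ (fun ω => u ω * v ω) := by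
  have := nonempty_of_sum_eq_one hμ1
  rcases lt_trichotomy q 0 with hq0 | rfl | hq0
  · -- For `q < 0` the roles swap: `0 < q' < 1` and `q'' = q`.
    have := pnorm_mul_pnorm_hconj_le_of_pos hμ (hconj_pos_of_neg hq0) (hconj_lt_one_of_neg hq0)
      hv hu
    rw [hconj_hconj hq.ne, pexp_mul_comm] at this
    rwa [mul_comm]
  · rw [hconj_zero, pnorm_zero_mul hu hv]
    exact pnorm_zero_le_pexp (fun ω => (hμ ω).le) hμ1 fun ω => mul_pos (hu ω) (hv ω)
  · exact pnorm_mul_pnorm_hconj_le_of_pos hμ hq0 hq hu hv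

lemma exists_pexp_mul_eq_pnorm_mul_pnorm_hconj (hμ : ∀ ω, 0 ≤ μ ω) (hμ1 : ∑ ω, μ ω = 1)
    {p : ℝ} (hp : p ≠ 1) {h : Ω → ℝ} (hh : ∀ ω, 0 < h ω) :
    ∃ g : Ω → ℝ, (∀ ω, 0 < g ω) ∧
      pexp μ (fun ω => g ω * h ω) = pnorm μ p g * pnorm μ (hconj p) h := by
  rcases eq_or_ne p 0 with rfl | hp0
  · refine ⟨fun ω => (h ω)⁻¹, fun ω => inv_pos.2 (hh ω), ?_⟩
    rw [hconj_zero, pnorm_zero_mul (fun ω => inv_pos.2 (hh ω)) hh]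
    simp [pnorm_zero, pexp, inv_mul_cancel₀ (hh _).ne', hμ1]
  have hp1 : p - 1 ≠ 0 := sub_ne_zero.2 hp
  refine ⟨fun ω => h ω ^ (1 / (p - 1)), fun ω => Real.rpow_pos_of_pos (hh ω) _, ?_⟩
  set S := pexp μ fun ω => h ω ^ (p / (p - 1))
  have hgh : ∀ ω, h ω ^ (1 / (p - 1)) * h ω = h ω ^ (p / (p - 1)) := fun ω => by
    rw [← Real.rpow_add_one (hh ω).ne']
    congr 1
    field_simp
    ring
  have hgp : ∀ ω, (h ω ^ (1 / (p - 1))) ^ p = h ω ^ (p / (p - 1)) := fun ω => by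
    rw [← Real.rpow_mul (hh ω).le, one_div_mul_eq_div]
  have hS : 0 ≤ S := pexp_nonneg hμ fun ω => (Real.rpow_pos_of_pos (hh ω) _).le
  rw [pnorm_of_ne_zero hp0, pnorm_of_ne_zero (hconj_of_ne_zero hp0 ▸ div_ne_zero hp0 hp1),
    hconj_of_ne_zero hp0, one_div_div]
  simp only [hgh, hgp]
  have hexp : 1 / p + (p - 1) / p = 1 := by field_simp; ring
  rw [← Real.rpow_add' hS (by rw [hexp]; exact one_ne_zero), hexp, Real.rpow_one]

end Norms

/-- duality for reverse hypercontractive estimates. -/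
theorem reverse_hyper_dual [Fintype Ω] (μ : Ω → ℝ)
    (hμpos : ∀ ω, 0 < μ ω) (hμ1 : ∑ ω, μ ω = 1)
    (L : (Ω → ℝ) →ₗ[ℝ] (Ω → ℝ)) (hL : IsGen μ L)
    (p q t : ℝ) (hp : p < 1) (hq : q < 1) (ht : 0 ≤ t)
    (h : ∀ f : Ω → ℝ, (∀ ω, 0 < f ω) → pnorm μ p f ≤ pnorm μ q (heat L t f)) :
    ∀ f : Ω → ℝ, (∀ ω, 0 < f ω) →
      pnorm μ (hconj q) f ≤ pnorm μ (hconj p) (heat L t f) := by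
  intro f hf
  have := nonempty_of_sum_eq_one hμ1
  have hsymm : IsSelfAdjointWrt μ (heat L t) := IsSelfAdjointWrt.heat hL.2.1 t
  obtain ⟨g, hg, hgeq⟩ := exists_pexp_mul_eq_pnorm_mul_pnorm_hconj (fun ω => (hμpos ω).le) hμ1
    hp.ne (heat_pos hL.2.2.2 ht hf)
  refine le_of_mul_le_mul_left ?_ (pnorm_pos hμpos p hg)
  calc pnorm μ p g * pnorm μ (hconj q) f
      ≤ pnorm μ q (heat L t g) * pnorm μ (hconj q) f :=
        mul_le_mul_of_nonneg_right (h g hg) (pnorm_pos hμpos _ hf).le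
    _ ≤ pexp μ (fun ω => heat L t g ω * f ω) :=
        pnorm_mul_pnorm_hconj_le hμpos hμ1 hq (heat_pos hL.2.2.2 ht hg) hf
    _ = pexp μ (fun ω => g ω * heat L t f ω) := by rw [pexp_mul_comm, hsymm]
    _ = pnorm μ p g * pnorm μ (hconj p) (heat L t f) := hgeq

end
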